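/- arXiv:1706.08117 — 2 statements merged into one kernel-verified Lean document; each statement's English description precedes it below -/
import Mathlib

section
/- Let (X_t)_{t≥0} be a 3-color cyclic cellular automaton trajectory on ℤ: X_{t+1}(v) = X_t(v)+1 mod 3 if some neighbor u ∈ {v−1,v+1} has X_t(u) = X_t(v)+1 mod 3, else X_{t+1}(v) = X_t(v). Define dX_t(x, x+1) ∈ {−1,0,1} as the representative of X_t(x+1) − X_t(x) mod 3. Then for all t ≥ 0: {dX_t(0,1) = −1} = {Σ_{x=−t}^{s} dX_0(x, x+1) ≤ −1 for all −t ≤ s ≤ t}. -/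
open scoped BigOperators

/-- One synchronous step of the 3-color cyclic cellular automaton on `ℤ`:
a site advances its color by `1 (mod 3)` iff some neighbor has that color. -/
def ccaStep (c : ℤ → ZMod 3) : ℤ → ZMod 3 := fun v =>
  if c (v - 1) = c v + 1 ∨ c (v + 1) = c v + 1 then c v + 1 else c v

/-- The representative in `{-1,0,1} ⊆ ℤ` of an element of `ℤ₃`. -/
def code3 (z : ZMod 3) : ℤ := if z = 0 then 0 else if z = 1 then 1 else -1

/-!
Let `S` be a height function of the initial configuration: `S (v + 1) - S v = dX₀(v, v+1)`, so
`S` is `1`-Lipschitz. By induction on `t`, `dX_t(x, x+1) = -1` iff `S (x - t)` strictly exceeds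
every other value of `S` on the window `[x - t, x + t + 1]`, and `dX_t(x, x+1) = 1` iff the right
end `S (x + t + 1)` does. The automaton computes `dX_{t+1}(x, x+1)` from `dX_t` on the edges
`x - 1, x, x + 1`, whose windows are the three subwindows of the new window obtained by dropping
two points, and for a `1`-Lipschitz `S` the strict-maximum conditions satisfy the same recursion.
The sum condition of the theorem is the left-end condition at `x = 0`, written through `S`.
-/

open Finset

/-- The paper's `dX(x, x+1)`. -/
def edgeDiff (c : ℤ → ZMod 3) (x : ℤ) : ℤ := code3 (c (x + 1) - c x)

lemma abs_code3_le_one (z : ZMod 3) : |code3 z| ≤ 1 := by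
  revert z; decide

lemma abs_edgeDiff_le_one (c : ℤ → ZMod 3) (x : ℤ) : |edgeDiff c x| ≤ 1 :=
  abs_code3_le_one _

lemma edgeDiff_ccaStep_eq_neg_one (c : ℤ → ZMod 3) (x : ℤ) :
    edgeDiff (ccaStep c) x = -1 ↔ edgeDiff c (x - 1) = -1 ∧
      (edgeDiff c x = -1 ∨ (edgeDiff c x ≠ 1 ∧ edgeDiff c (x + 1) ≠ 1)) := by
  simp only [edgeDiff, ccaStep, add_sub_cancel_right, sub_add_cancel, add_assoc,
    one_add_one_eq_two]
  generalize c (x - 1) = a, c x = b, c (x + 1) = d, c (x + 2) = e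
  revert a b d e; decide

lemma edgeDiff_ccaStep_eq_one (c : ℤ → ZMod 3) (x : ℤ) :
    edgeDiff (ccaStep c) x = 1 ↔ edgeDiff c (x + 1) = 1 ∧
      (edgeDiff c x = 1 ∨ (edgeDiff c x ≠ -1 ∧ edgeDiff c (x - 1) ≠ -1)) := by
  simp only [edgeDiff, ccaStep, add_sub_cancel_right, sub_add_cancel, add_assoc,
    one_add_one_eq_two]
  generalize c (x - 1) = a, c x = b, c (x + 1) = d, c (x + 2) = e
  revert a b d e; decide

lemma exists_add_one_eq_add (d : ℤ → ℤ) : ∃ S : ℤ → ℤ, ∀ v, S (v + 1) = S v + d v := by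
  refine ⟨fun v => ∑ y ∈ Ico 0 v, d y - ∑ y ∈ Ico v 0, d y, fun v => ?_⟩
  dsimp only
  rcases le_or_gt 0 v with hv | hv
  · rw [← insert_Ico_right_eq_Ico_add_one hv, sum_insert right_notMem_Ico,
      Ico_eq_empty_of_le hv, Ico_eq_empty_of_le (by omega : 0 ≤ v + 1)]
    ring
  · rw [← insert_Ico_add_one_left_eq_Ico hv, sum_insert (by simp),
      Ico_eq_empty_of_le hv.le, Ico_eq_empty_of_le (by omega : v + 1 ≤ 0)]
    ring

lemma sum_Ico_eq_sub {S d : ℤ → ℤ} (hS : ∀ v, S (v + 1) = S v + d v) {a b : ℤ}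
    (h : a ≤ b) : ∑ y ∈ Ico a b, d y = S b - S a := by
  induction b, h using Int.leInduction with
  | base => simp
  | succ n hn ih =>
    rw [← insert_Ico_right_eq_Ico_add_one hn, sum_insert right_notMem_Ico, ih, hS]; ring

def StrictMaxLeft (S : ℤ → ℤ) (l r : ℤ) : Prop := ∀ v, l < v → v ≤ r → S v < S l

def StrictMaxRight (S : ℤ → ℤ) (l r : ℤ) : Prop := ∀ v, l ≤ v → v < r → S v < S r

lemma strictMaxLeft_add_one_iff {S : ℤ → ℤ} {l : ℤ} :
    StrictMaxLeft S l (l + 1) ↔ S (l + 1) < S l :=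
  ⟨fun h => h _ (by omega) le_rfl, fun h v h₁ h₂ => by rwa [show v = l + 1 by omega]⟩

lemma strictMaxRight_add_one_iff {S : ℤ → ℤ} {l : ℤ} :
    StrictMaxRight S l (l + 1) ↔ S l < S (l + 1) :=
  ⟨fun h => h _ le_rfl (by omega), fun h v h₁ h₂ => by rwa [show v = l by omega]⟩

lemma strictMaxLeft_add_one_iff_sum_le {S d : ℤ → ℤ} (hS : ∀ v, S (v + 1) = S v + d v)
    {l r : ℤ} : StrictMaxLeft S l (r + 1) ↔ ∀ s, l ≤ s → s ≤ r → ∑ y ∈ Icc l s, d y ≤ -1 := by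
  have hsum : ∀ s, l ≤ s → ∑ y ∈ Icc l s, d y = S (s + 1) - S l := fun s hs => by
    rw [← Ico_add_one_right_eq_Icc, sum_Ico_eq_sub hS (by omega)]
  constructor
  · intro h s h₁ h₂
    have := h (s + 1) (by omega) (by omega)
    rw [hsum s h₁]; omega
  · intro h v h₁ h₂
    have := h (v - 1) (by omega) (by omega)
    rw [hsum _ (by omega), sub_add_cancel] at this; omega

section Lipschitz

variable {S : ℤ → ℤ} (hS : ∀ v, |S (v + 1) - S v| ≤ 1) {l r : ℤ}
include hS

lemma strictMaxLeft_iff (h : l + 3 ≤ r) :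
    StrictMaxLeft S l r ↔ StrictMaxLeft S l (r - 2) ∧ (StrictMaxLeft S (l + 1) (r - 1) ∨
      (¬StrictMaxRight S (l + 1) (r - 1) ∧ ¬StrictMaxRight S (l + 2) r)) := by
  have hl := abs_le.1 (hS l)
  have hr := abs_le.1 (hS (r - 1))
  rw [sub_add_cancel] at hr
  constructor
  · intro hmax
    have hl₁ := hmax (l + 1) (by omega) (by omega)
    refine ⟨fun v h₁ h₂ => hmax v h₁ (by omega),
      or_iff_not_imp_left.2 fun hB => ⟨fun hC => ?_, fun hD => ?_⟩⟩
    · have := hC (l + 1) le_rfl (by omega)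
      have := hmax (r - 1) (by omega) (by omega)
      omega
    · obtain ⟨v, h₁, h₂, hv⟩ : ∃ v, l + 1 < v ∧ v ≤ r - 1 ∧ S (l + 1) ≤ S v := by
        simpa [StrictMaxLeft] using hB
      have := hD v (by omega) (by omega)
      have := hmax r (by omega) le_rfl
      omega
  · rintro ⟨hA, hBCD⟩
    have hA₁ := hA (l + 1) (by omega) (by omega)
    suffices S (r - 1) < S l ∧ S r < S l by
      intro v h₁ h₂
      obtain h₂ | rfl | rfl : v ≤ r - 2 ∨ v = r - 1 ∨ v = r := by omega
      exacts [hA v h₁ h₂, this.1, this.2]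
    rcases hBCD with hB | ⟨hC, hD⟩
    · have := hB (r - 1) (by omega) le_rfl
      omega
    · obtain ⟨v, h₁, h₂, hv⟩ : ∃ v, l + 1 ≤ v ∧ v < r - 1 ∧ S (r - 1) ≤ S v := by
        simpa [StrictMaxRight] using hC
      obtain ⟨w, h₃, h₄, hw⟩ : ∃ w, l + 2 ≤ w ∧ w < r ∧ S r ≤ S w := by
        simpa [StrictMaxRight] using hD
      have := hA v (by omega) (by omega)
      obtain h₄ | rfl : w ≤ r - 2 ∨ w = r - 1 := by omega
      · have := hA w (by omega) h₄
        omega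
      · omega

lemma strictMaxRight_iff (h : l + 3 ≤ r) :
    StrictMaxRight S l r ↔ StrictMaxRight S (l + 2) r ∧ (StrictMaxRight S (l + 1) (r - 1) ∨
      (¬StrictMaxLeft S (l + 1) (r - 1) ∧ ¬StrictMaxLeft S l (r - 2))) := by
  have hl := abs_le.1 (hS l)
  have hr := abs_le.1 (hS (r - 1))
  rw [sub_add_cancel] at hr
  constructor
  · intro hmax
    have hr₁ := hmax (r - 1) (by omega) (by omega)
    refine ⟨fun v h₁ h₂ => hmax v (by omega) h₂,
      or_iff_not_imp_left.2 fun hB => ⟨fun hC => ?_, fun hD => ?_⟩⟩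
    · have := hC (r - 1) (by omega) le_rfl
      have := hmax (l + 1) (by omega) (by omega)
      omega
    · obtain ⟨v, h₁, h₂, hv⟩ : ∃ v, l + 1 ≤ v ∧ v < r - 1 ∧ S (r - 1) ≤ S v := by
        simpa [StrictMaxRight] using hB
      have := hD v (by omega) (by omega)
      have := hmax l le_rfl (by omega)
      omega
  · rintro ⟨hD, hBCA⟩
    have hD₁ := hD (r - 1) (by omega) (by omega)
    suffices S (l + 1) < S r ∧ S l < S r by
      intro v h₁ h₂
      obtain h₁ | rfl | rfl : l + 2 ≤ v ∨ v = l + 1 ∨ v = l := by omega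
      exacts [hD v h₁ h₂, this.1, this.2]
    rcases hBCA with hB | ⟨hC, hA⟩
    · have := hB (l + 1) le_rfl (by omega)
      omega
    · obtain ⟨v, h₁, h₂, hv⟩ : ∃ v, l + 1 < v ∧ v ≤ r - 1 ∧ S (l + 1) ≤ S v := by
        simpa [StrictMaxLeft] using hC
      obtain ⟨w, h₃, h₄, hw⟩ : ∃ w, l < w ∧ w ≤ r - 2 ∧ S l ≤ S w := by
        simpa [StrictMaxLeft] using hA
      have := hD v (by omega) (by omega)
      obtain h₃ | rfl : l + 2 ≤ w ∨ w = l + 1 := by omega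
      · have := hD w h₃ (by omega)
        omega
      · omega

end Lipschitz

theorem edgeDiff_sign_iff_strictMax {X : ℕ → ℤ → ZMod 3} (hX : ∀ t, X (t + 1) = ccaStep (X t))
    {S : ℤ → ℤ} (hS : ∀ v, S (v + 1) = S v + edgeDiff (X 0) v) (t : ℕ) (x : ℤ) :
    (edgeDiff (X t) x = -1 ↔ StrictMaxLeft S (x - t) (x + t + 1)) ∧
      (edgeDiff (X t) x = 1 ↔ StrictMaxRight S (x - t) (x + t + 1)) := by
  have hLip : ∀ v, |S (v + 1) - S v| ≤ 1 := fun v => by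
    rw [hS, add_sub_cancel_left]; exact abs_edgeDiff_le_one _ _
  induction t generalizing x with
  | zero =>
    have := abs_le.1 (abs_edgeDiff_le_one (X 0) x)
    simp only [Nat.cast_zero, sub_zero, add_zero, strictMaxLeft_add_one_iff,
      strictMaxRight_add_one_iff, hS]
    omega
  | succ t ih =>
    constructor
    · rw [hX, edgeDiff_ccaStep_eq_neg_one, ne_eq, ne_eq, (ih (x - 1)).1, (ih x).1, (ih x).2,
        (ih (x + 1)).2,
        strictMaxLeft_iff hLip (l := x - ↑(t + 1)) (r := x + ↑(t + 1) + 1) (by omega)]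
      push_cast
      ring_nf
    · rw [hX, edgeDiff_ccaStep_eq_one, ne_eq, ne_eq, (ih (x - 1)).1, (ih x).1, (ih x).2,
        (ih (x + 1)).2,
        strictMaxRight_iff hLip (l := x - ↑(t + 1)) (r := x + ↑(t + 1) + 1) (by omega)]
      push_cast
      ring_nf

/-- Fisch's survival identity: for any 3-color CCA trajectory
`(X_t)` on `ℤ` with edge differential `dX_t(x,x+1) = code3 (X_t(x+1) - X_t(x))`,
for all `t ≥ 0`: `dX_t(0,1) = -1` iff
`∑_{x=-t}^{s} dX_0(x,x+1) ≤ -1` for all `-t ≤ s ≤ t`. -/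
theorem stmt_12 (X : ℕ → ℤ → ZMod 3)
    (hX : ∀ t v, X (t + 1) v = ccaStep (X t) v) :
    ∀ t : ℕ,
      (code3 (X t 1 - X t 0) = -1) ↔
        (∀ s : ℤ, -(t : ℤ) ≤ s → s ≤ (t : ℤ) →
          (∑ x ∈ Finset.Icc (-(t : ℤ)) s, code3 (X 0 (x + 1) - X 0 x)) ≤ -1) := by
  intro t
  obtain ⟨S, hS⟩ := exists_add_one_eq_add (edgeDiff (X 0))
  have h := (edgeDiff_sign_iff_strictMax (fun t => funext (hX t)) hS t 0).1
  rwa [zero_sub, zero_add, strictMaxLeft_add_one_iff_sum_le hS] at h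
end

section
/- Let (X_t)_{t≥1} be a 3-color FCA trajectory on ℤ, and suppose at time t ≥ 1 there is an r-particle on edge (x, x+1), i.e. dX_t(x, x+1) = 1. If X_t(x) ≠ 1, then dX_{t+1}(x, x+1) = 1 (the r-particle remains on the same edge at time t+1). -/
/-!
At time `t ≥ 1` the configuration is itself an image of `fcaStep`, and no image of `fcaStep`
contains the triple `(1,2,0)`: a cell showing `1` was `0` before, so its right neighbour showing
`2` was `1` or a blocked `2`, and in either case the cell to its right cannot show `0`. With an
`r`-particle on `(x,x+1)` and `X_t(x) ≠ 1`, the pair `(X_t(x), X_t(x+1))` is `(0,1)` or `(2,0)`;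
both cells advance (in the second case `x` is not blocked, precisely because `(1,2,0)` is absent),
so the difference stays `1`.
-/

/-- One synchronous step of the 3-color firefly cellular automaton on `ℤ`. -/
def fcaStep (c : ℤ → ZMod 3) : ℤ → ZMod 3 := fun v =>
  if c v = 2 ∧ (c (v - 1) = 1 ∨ c (v + 1) = 1) then c v else c v + 1

lemma code3_eq_one_iff (z : ZMod 3) : code3 z = 1 ↔ z = 1 := by
  revert z; decide

section fcaStep

variable (c : ℤ → ZMod 3) (v : ℤ)

lemma fcaStep_eq_one_iff : fcaStep c v = 1 ↔ c v = 0 := by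
  unfold fcaStep
  generalize c (v - 1) = p, c v = q, c (v + 1) = r
  decide +revert

lemma fcaStep_eq_zero_iff :
    fcaStep c v = 0 ↔ c v = 2 ∧ c (v - 1) ≠ 1 ∧ c (v + 1) ≠ 1 := by
  unfold fcaStep
  generalize c (v - 1) = p, c v = q, c (v + 1) = r
  decide +revert

lemma fcaStep_eq_two_iff :
    fcaStep c v = 2 ↔ c v = 1 ∨ c v = 2 ∧ (c (v - 1) = 1 ∨ c (v + 1) = 1) := by
  unfold fcaStep
  generalize c (v - 1) = p, c v = q, c (v + 1) = r
  decide +revert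

lemma fcaStep_not_one_two_zero :
    ¬(fcaStep c (v - 1) = 1 ∧ fcaStep c v = 2 ∧ fcaStep c (v + 1) = 0) := by
  rintro ⟨hl, hm, hr⟩
  rw [fcaStep_eq_one_iff] at hl
  rw [fcaStep_eq_zero_iff, add_sub_cancel_right] at hr
  obtain ⟨hr_two, hv_ne_one, -⟩ := hr
  rcases (fcaStep_eq_two_iff c v).1 hm with hv_one | ⟨-, hl_one | hr_one⟩
  · exact hv_ne_one hv_one
  · exact absurd (hl.symm.trans hl_one) (by decide)
  · exact absurd (hr_two.symm.trans hr_one) (by decide)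

end fcaStep

lemma fcaStep_sub_eq_one_of_sub_eq_one (c : ℤ → ZMod 3) (x : ℤ)
    (hflip : ¬(c (x - 1) = 1 ∧ c x = 2 ∧ c (x + 1) = 0))
    (hr : c (x + 1) - c x = 1) (hx : c x ≠ 1) :
    fcaStep c (x + 1) - fcaStep c x = 1 := by
  have hnext : c (x + 1) = c x + 1 := by rw [← hr, add_sub_cancel]
  obtain hx0 | hx2 : c x = 0 ∨ c x = 2 := by
    generalize c x = a at hx; revert a; decide
  · have hstep_x : fcaStep c x = 1 := (fcaStep_eq_one_iff c x).2 hx0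
    have hstep_next : fcaStep c (x + 1) = 2 :=
      (fcaStep_eq_two_iff c _).2 (Or.inl (by rw [hnext, hx0]; decide))
    rw [hstep_x, hstep_next]; decide
  · have hnext0 : c (x + 1) = 0 := by rw [hnext, hx2]; decide
    have hstep_next : fcaStep c (x + 1) = 1 := (fcaStep_eq_one_iff c _).2 hnext0
    have hstep_x : fcaStep c x = 0 :=
      (fcaStep_eq_zero_iff c x).2 ⟨hx2, fun h => hflip ⟨h, hx2, hnext0⟩, by simp [hnext0]⟩
    rw [hstep_x, hstep_next]; decide

/-- along a 3-color FCA trajectory on `ℤ`, if at time `t ≥ 1`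
there is an `r`-particle on edge `(x,x+1)` (i.e. `dX_t(x,x+1) = 1`) and
`X_t(x) ≠ 1`, then `dX_{t+1}(x,x+1) = 1`. -/
theorem stmt_14 (X : ℕ → ℤ → ZMod 3)
    (hX : ∀ t v, X (t + 1) v = fcaStep (X t) v)
    (t : ℕ) (ht : 1 ≤ t) (x : ℤ)
    (hr : code3 (X t (x + 1) - X t x) = 1)
    (hblink : X t x ≠ 1) :
    code3 (X (t + 1) (x + 1) - X (t + 1) x) = 1 := by
  obtain ⟨s, rfl⟩ : ∃ s, t = s + 1 := ⟨t - 1, by omega⟩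
  have hXs : X (s + 1) = fcaStep (X s) := funext (hX s)
  have hflip : ¬(X (s + 1) (x - 1) = 1 ∧ X (s + 1) x = 2 ∧ X (s + 1) (x + 1) = 0) := by
    rw [hXs]; exact fcaStep_not_one_two_zero (X s) x
  rw [code3_eq_one_iff] at hr ⊢
  rw [hX (s + 1), hX (s + 1)]
  exact fcaStep_sub_eq_one_of_sub_eq_one _ x hflip hr hblink
end
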